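/- Let π ∈ ℝ^{n_p}, L ∈ ℝ^{n×1}, let W_1, W_2 ∈ ℝ^{n×n} be symmetric positive definite, and let P_1, P_2 ∈ ℝ^{n×n} be symmetric positive definite solutions of the Lyapunov equations F̄(π)^⊤P_1 + P_1 F̄(π) = −W_1 and (F̄(π)+L H̄(π))^⊤P_2 + P_2 (F̄(π)+L H̄(π)) = −W_2. Define V(z,e) := z^⊤P_1 z + e^⊤P_2 e, the dynamics ż := A z + B(z^⊤Q z + H̄(π)(z+e)) and ė := (F̄(π)+L H̄(π)) e + (B+L) H̄(π) z + (B+L)(2 z^⊤Q e + e^⊤Q e), and the constants c_1 := min{λ_min(W_1), λ_min(W_2)} / max{λ_max(P_1), λ_max(P_2)}, c_3 := (2‖P_1 B H̄(π)‖ + 2‖H̄(π)^⊤(B+L)^⊤P_2‖)/√(λ_min(P_1)λ_min(P_2)), c_4 := 2‖P_1 B‖‖Q‖/λ_min(P_1)^{3/2} + 4‖P_2(B+L)‖‖Q‖/(√(λ_min(P_1))λ_min(P_2)) + 2‖P_2(B+L)‖‖Q‖/λ_min(P_2)^{3/2}, and c_2 := c_1 − c_3. Then for all z, e ∈ ℝ^n: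 2 z^⊤P_1 ż + 2 e^⊤P_2 ė ≤ −c_2 · V(z,e) + c_4 · V(z,e)^{3/2}. -/

import Mathlib

/-!
Along the closed loop the Lyapunov equations turn the linear part of `V̇` into
`-zᵀW₁z - eᵀW₂e`, and the Rayleigh bounds `λ_min(W)‖x‖² ≤ xᵀWx`, `xᵀPx ≤ λ_max(P)‖x‖²` push this
below `-c₁V`. What remains are the bilinear couplings `2zᵀP₁BH̄e`, `2eᵀP₂(B+L)H̄z` and the cubic
terms produced by the quadratic nonlinearity. Since `‖z‖ ≤ √V / √λ_min(P₁)` and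
`‖e‖ ≤ √V / √λ_min(P₂)`, every factor `‖z‖` or `‖e‖` costs one `√V`: the couplings are at most
`c₃V` and the cubic terms at most `c₄V^{3/2}`.
-/

open Matrix
noncomputable section

/-- Spectral norm: operator norm induced by the Euclidean norms. -/
def opNorm {m n : Type*} [Fintype m] [Fintype n] [DecidableEq n] (M : Matrix m n ℝ) : ℝ :=
  ‖(Matrix.toEuclideanLin M).toContinuousLinearMap‖

/-- Euclidean norm of a real vector. -/
def evnorm {n : Type*} [Fintype n] (v : n → ℝ) : ℝ :=
  Real.sqrt (∑ i, (v i) ^ 2)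

variable {np nc : ℕ}

/-- `A = [[A_p, B_p C_c],[0, A_c]]`. -/
def Amat (Ap : Matrix (Fin np) (Fin np) ℝ) (Ac : Matrix (Fin nc) (Fin nc) ℝ)
    (Bp : Matrix (Fin np) (Fin 1) ℝ) (Cc : Matrix (Fin 1) (Fin nc) ℝ) :
    Matrix (Fin np ⊕ Fin nc) (Fin np ⊕ Fin nc) ℝ :=
  Matrix.fromBlocks Ap (Bp * Cc) 0 Ac

/-- `B = [B_p D_c; B_c]`. -/
def Bmat (Bp : Matrix (Fin np) (Fin 1) ℝ) (Bc : Matrix (Fin nc) (Fin 1) ℝ) (Dc : ℝ) :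
    Matrix (Fin np ⊕ Fin nc) (Fin 1) ℝ :=
  Matrix.fromRows (Dc • Bp) Bc

/-- `H̄(π) = [2 π^⊤ Q_p, 0]`. -/
def Hbar (Qp : Matrix (Fin np) (Fin np) ℝ) (π : Fin np → ℝ) :
    Matrix (Fin 1) (Fin np ⊕ Fin nc) ℝ :=
  Matrix.of fun _ j => Sum.elim (fun i => 2 * (π ᵥ* Qp) i) (fun _ => 0) j

/-- `F̄(π) = A + B H̄(π)`. -/
def Fbar (Ap : Matrix (Fin np) (Fin np) ℝ) (Ac : Matrix (Fin nc) (Fin nc) ℝ)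
    (Bp : Matrix (Fin np) (Fin 1) ℝ) (Bc : Matrix (Fin nc) (Fin 1) ℝ)
    (Cc : Matrix (Fin 1) (Fin nc) ℝ) (Dc : ℝ)
    (Qp : Matrix (Fin np) (Fin np) ℝ) (π : Fin np → ℝ) :
    Matrix (Fin np ⊕ Fin nc) (Fin np ⊕ Fin nc) ℝ :=
  Amat Ap Ac Bp Cc + Bmat Bp Bc Dc * Hbar Qp π

/-- `Q = [[Q_p, 0],[0, 0]]`. -/
def Qmat (Qp : Matrix (Fin np) (Fin np) ℝ) :
    Matrix (Fin np ⊕ Fin nc) (Fin np ⊕ Fin nc) ℝ :=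
  Matrix.fromBlocks Qp 0 0 0

/-- The closed-loop vector field `ż = Az + B(z^⊤Qz + H̄(π)(z+e))`
(`B` column acting by scalar multiplication). -/
def zdot (Ap : Matrix (Fin np) (Fin np) ℝ) (Ac : Matrix (Fin nc) (Fin nc) ℝ)
    (Bp : Matrix (Fin np) (Fin 1) ℝ) (Bc : Matrix (Fin nc) (Fin 1) ℝ)
    (Cc : Matrix (Fin 1) (Fin nc) ℝ) (Dc : ℝ)
    (Qp : Matrix (Fin np) (Fin np) ℝ) (π : Fin np → ℝ)
    (z e : Fin np ⊕ Fin nc → ℝ) : Fin np ⊕ Fin nc → ℝ :=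
  Amat Ap Ac Bp Cc *ᵥ z +
    (z ⬝ᵥ (Qmat Qp *ᵥ z) + (fun j => Hbar Qp π 0 j) ⬝ᵥ (z + e)) •
      fun i => Bmat Bp Bc Dc i 0

/-- The estimation-error vector field
`ė = (F̄(π)+LH̄(π))e + (B+L)H̄(π)z + (B+L)(2z^⊤Qe + e^⊤Qe)`. -/
def edot (Ap : Matrix (Fin np) (Fin np) ℝ) (Ac : Matrix (Fin nc) (Fin nc) ℝ)
    (Bp : Matrix (Fin np) (Fin 1) ℝ) (Bc : Matrix (Fin nc) (Fin 1) ℝ)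
    (Cc : Matrix (Fin 1) (Fin nc) ℝ) (Dc : ℝ)
    (Qp : Matrix (Fin np) (Fin np) ℝ) (π : Fin np → ℝ)
    (L : Matrix (Fin np ⊕ Fin nc) (Fin 1) ℝ)
    (z e : Fin np ⊕ Fin nc → ℝ) : Fin np ⊕ Fin nc → ℝ :=
  (Fbar Ap Ac Bp Bc Cc Dc Qp π + L * Hbar Qp π) *ᵥ e +
    ((Bmat Bp Bc Dc + L) * Hbar Qp π) *ᵥ z +
    (2 * (z ⬝ᵥ (Qmat Qp *ᵥ e)) + e ⬝ᵥ (Qmat Qp *ᵥ e)) •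
      fun i => (Bmat Bp Bc Dc + L) i 0

lemma mul_mulVec_eq_smul {m k : Type*} [Fintype k] (C : Matrix m (Fin 1) ℝ)
    (R : Matrix (Fin 1) k ℝ) (v : k → ℝ) :
    (C * R) *ᵥ v = ((fun j => R 0 j) ⬝ᵥ v) • fun i => C i 0 := by
  funext i
  simp only [mulVec, dotProduct, mul_apply, Fin.sum_univ_one, Pi.smul_apply,
    smul_eq_mul, Finset.sum_mul]
  exact Finset.sum_congr rfl fun j _ => by ring

lemma col_eq_mulVec_one {m : Type*} (C : Matrix m (Fin 1) ℝ) :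
    (fun i => C i 0) = C *ᵥ fun _ => 1 := by
  funext i
  simp [mulVec, dotProduct]

section OperatorNorm

variable {m k l : Type*} [Fintype m] [Fintype k] [Fintype l]

lemma evnorm_nonneg (v : m → ℝ) : 0 ≤ evnorm v := Real.sqrt_nonneg _

lemma sum_sq_eq_dotProduct (v : m → ℝ) : ∑ i, v i ^ 2 = v ⬝ᵥ v := by
  simp [dotProduct, sq]

lemma evnorm_sq (v : m → ℝ) : evnorm v ^ 2 = v ⬝ᵥ v := by
  rw [evnorm, Real.sq_sqrt (Finset.sum_nonneg fun _ _ => sq_nonneg _), sum_sq_eq_dotProduct]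

lemma evnorm_eq_norm_toLp (v : m → ℝ) : evnorm v = ‖WithLp.toLp 2 v‖ := by
  simp [evnorm, EuclideanSpace.norm_eq]

lemma abs_dotProduct_mulVec_le [DecidableEq k] (M : Matrix m k ℝ) (x : m → ℝ) (y : k → ℝ) :
    |x ⬝ᵥ (M *ᵥ y)| ≤ opNorm M * evnorm x * evnorm y := by
  set T := (toEuclideanLin M).toContinuousLinearMap
  have hinner : x ⬝ᵥ (M *ᵥ y) = inner ℝ (WithLp.toLp 2 x) (T (WithLp.toLp 2 y)) := by
    simp [T, PiLp.inner_apply, dotProduct, mul_comm]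
  rw [hinner, evnorm_eq_norm_toLp x, evnorm_eq_norm_toLp y, opNorm]
  calc _ ≤ ‖WithLp.toLp 2 x‖ * ‖T (WithLp.toLp 2 y)‖ := abs_real_inner_le_norm _ _
    _ ≤ ‖WithLp.toLp 2 x‖ * (‖T‖ * ‖WithLp.toLp 2 y‖) := by gcongr; exact T.le_opNorm _
    _ = _ := by ring

lemma abs_dotProduct_mulVec_col_le [DecidableEq m] (P : Matrix m m ℝ) (C : Matrix m (Fin 1) ℝ)
    (x : m → ℝ) : |x ⬝ᵥ (P *ᵥ fun i => C i 0)| ≤ opNorm (P * C) * evnorm x := by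
  simpa [col_eq_mulVec_one C, mulVec_mulVec, evnorm] using
    abs_dotProduct_mulVec_le (P * C) x fun _ => 1

lemma abs_dotProduct_mulVec_le_of_evnorm_le [DecidableEq k] (M : Matrix m k ℝ) {x : m → ℝ}
    {y : k → ℝ} {s t α β : ℝ} (hx : evnorm x ≤ s / α) (hy : evnorm y ≤ t / β) :
    |x ⬝ᵥ (M *ᵥ y)| ≤ opNorm M * (s / α) * (t / β) := by
  have hM : 0 ≤ opNorm M := norm_nonneg _
  calc _ ≤ opNorm M * evnorm x * evnorm y := abs_dotProduct_mulVec_le M x y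
    _ ≤ _ := mul_le_mul (mul_le_mul_of_nonneg_left hx hM) hy (evnorm_nonneg y)
        (mul_nonneg hM ((evnorm_nonneg x).trans hx))

lemma dotProduct_mulVec_le_of_evnorm_le [DecidableEq k] (M : Matrix m k ℝ) {x : m → ℝ}
    {y : k → ℝ} {s α β : ℝ} (hx : evnorm x ≤ s / α) (hy : evnorm y ≤ s / β) :
    x ⬝ᵥ (M *ᵥ y) ≤ opNorm M / (α * β) * s ^ 2 := by
  calc _ ≤ |x ⬝ᵥ (M *ᵥ y)| := le_abs_self _
    _ ≤ opNorm M * (s / α) * (s / β) := abs_dotProduct_mulVec_le_of_evnorm_le M hx hy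
    _ = _ := by ring

lemma dotProduct_mulVec_mul_le_of_evnorm_le [DecidableEq k] [DecidableEq l] (Q : Matrix m k ℝ)
    (P : Matrix l l ℝ) (C : Matrix l (Fin 1) ℝ) {x : m → ℝ} {y : k → ℝ} {w : l → ℝ}
    {s α β γ : ℝ} (hx : evnorm x ≤ s / α) (hy : evnorm y ≤ s / β) (hw : evnorm w ≤ s / γ) :
    (x ⬝ᵥ (Q *ᵥ y)) * (w ⬝ᵥ (P *ᵥ fun i => C i 0)) ≤
      opNorm Q * opNorm (P * C) / (α * β * γ) * s ^ 3 := by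
  have hxy := abs_dotProduct_mulVec_le_of_evnorm_le Q hx hy
  have hw' : |w ⬝ᵥ (P *ᵥ fun i => C i 0)| ≤ opNorm (P * C) * (s / γ) :=
    (abs_dotProduct_mulVec_col_le P C w).trans (mul_le_mul_of_nonneg_left hw (norm_nonneg _))
  calc _ ≤ |x ⬝ᵥ (Q *ᵥ y)| * |w ⬝ᵥ (P *ᵥ fun i => C i 0)| := by
        rw [← abs_mul]; exact le_abs_self _
    _ ≤ (opNorm Q * (s / α) * (s / β)) * (opNorm (P * C) * (s / γ)) :=
        mul_le_mul hxy hw' (abs_nonneg _) ((abs_nonneg _).trans hxy)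
    _ = _ := by ring

end OperatorNorm

section Spectral

variable {n : Type*} [Fintype n] [DecidableEq n] {A : Matrix n n ℝ}

lemma Matrix.IsHermitian.dotProduct_mulVec_eq_sum (hA : A.IsHermitian) (x : n → ℝ) :
    x ⬝ᵥ (A *ᵥ x) =
      ∑ i, hA.eigenvalues i * ((hA.eigenvectorUnitary : Matrix n n ℝ)ᵀ *ᵥ x) i ^ 2 := by
  set U : Matrix n n ℝ := ↑hA.eigenvectorUnitary
  have hstar : star U = Uᵀ := by
    rw [star_eq_conjTranspose, conjTranspose_eq_transpose_of_trivial]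
  conv_lhs => rw [hA.spectral_theorem, Unitary.conjStarAlgAut_apply]
  rw [hstar, ← mulVec_mulVec, ← mulVec_mulVec, dotProduct_mulVec x U,
    ← mulVec_transpose]
  simp only [dotProduct, mulVec_diagonal]
  exact Finset.sum_congr rfl fun i _ => by simp; ring

lemma Matrix.IsHermitian.sum_sq_transpose_mulVec (hA : A.IsHermitian) (x : n → ℝ) :
    ∑ i, ((hA.eigenvectorUnitary : Matrix n n ℝ)ᵀ *ᵥ x) i ^ 2 = evnorm x ^ 2 := by
  set U : Matrix n n ℝ := ↑hA.eigenvectorUnitary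
  have hUU : U * Uᵀ = 1 := by
    rw [← conjTranspose_eq_transpose_of_trivial, ← star_eq_conjTranspose]
    exact mem_unitaryGroup_iff.mp hA.eigenvectorUnitary.2
  rw [sum_sq_eq_dotProduct, evnorm_sq, mulVec_transpose, ← dotProduct_mulVec,
    ← mulVec_transpose, mulVec_mulVec, hUU, one_mulVec]

lemma Matrix.IsHermitian.iInf_eigenvalues_mul_le (hA : A.IsHermitian) (x : n → ℝ) :
    (⨅ i, hA.eigenvalues i) * evnorm x ^ 2 ≤ x ⬝ᵥ (A *ᵥ x) := by
  rw [hA.dotProduct_mulVec_eq_sum, ← hA.sum_sq_transpose_mulVec, Finset.mul_sum]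
  exact Finset.sum_le_sum fun i _ =>
    mul_le_mul_of_nonneg_right (ciInf_le (Set.finite_range _).bddBelow i) (sq_nonneg _)

lemma Matrix.IsHermitian.le_iSup_eigenvalues_mul (hA : A.IsHermitian) (x : n → ℝ) :
    x ⬝ᵥ (A *ᵥ x) ≤ (⨆ i, hA.eigenvalues i) * evnorm x ^ 2 := by
  rw [hA.dotProduct_mulVec_eq_sum, ← hA.sum_sq_transpose_mulVec, Finset.mul_sum]
  exact Finset.sum_le_sum fun i _ =>
    mul_le_mul_of_nonneg_right (le_ciSup (Set.finite_range _).bddAbove i) (sq_nonneg _)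

lemma Matrix.PosDef.iInf_eigenvalues_pos [Nonempty n] (hA : A.PosDef) :
    0 < ⨅ i, hA.1.eigenvalues i := by
  obtain ⟨i, hi⟩ := exists_eq_ciInf_of_finite (f := hA.1.eigenvalues)
  exact hi ▸ hA.eigenvalues_pos i

lemma Matrix.PosDef.iSup_eigenvalues_pos [Nonempty n] (hA : A.PosDef) :
    0 < ⨆ i, hA.1.eigenvalues i :=
  (hA.eigenvalues_pos (Classical.arbitrary n)).trans_le
    (le_ciSup (Set.finite_range _).bddAbove _)

lemma Matrix.PosDef.evnorm_le [Nonempty n] (hA : A.PosDef) {x : n → ℝ} {t : ℝ}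
    (hx : x ⬝ᵥ (A *ᵥ x) ≤ t) : evnorm x ≤ √t / √(⨅ i, hA.1.eigenvalues i) := by
  have hpos := hA.iInf_eigenvalues_pos
  rw [← Real.sqrt_div' _ hpos.le]
  refine Real.le_sqrt_of_sq_le ?_
  rw [le_div_iff₀ hpos, mul_comm]
  exact (hA.1.iInf_eigenvalues_mul_le x).trans hx

end Spectral

section Dynamics

variable {n : Type*} [Fintype n]

lemma two_dotProduct_mulVec_of_lyapunov {F P W : Matrix n n ℝ} (hP : P.IsSymm)
    (h : Fᵀ * P + P * F = -W) (v : n → ℝ) :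
    2 * (v ⬝ᵥ (P *ᵥ (F *ᵥ v))) = -(v ⬝ᵥ (W *ᵥ v)) := by
  have hsymm : v ⬝ᵥ ((Fᵀ * P) *ᵥ v) = v ⬝ᵥ (P *ᵥ (F *ᵥ v)) := by
    rw [← mulVec_mulVec, dotProduct_mulVec v Fᵀ, vecMul_transpose,
      dotProduct_mulVec v P, ← mulVec_transpose, hP.eq, dotProduct_comm]
  rw [neg_eq_iff_eq_neg.mp h.symm, neg_mulVec, dotProduct_neg, add_mulVec,
    dotProduct_add, hsymm, ← mulVec_mulVec]
  ring

lemma dotProduct_mul_mul_mulVec (P : Matrix n n ℝ) (C : Matrix n (Fin 1) ℝ)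
    (R : Matrix (Fin 1) n ℝ) (x y : n → ℝ) :
    x ⬝ᵥ ((P * C * R) *ᵥ y) = ((fun j => R 0 j) ⬝ᵥ y) * (x ⬝ᵥ (P *ᵥ fun i => C i 0)) := by
  rw [mul_mulVec_eq_smul, dotProduct_smul, smul_eq_mul, col_eq_mulVec_one (P * C),
    col_eq_mulVec_one C, mulVec_mulVec]

lemma two_dotProduct_state_eq {F P W Q : Matrix n n ℝ} {B : Matrix n (Fin 1) ℝ}
    {R : Matrix (Fin 1) n ℝ} (hP : P.IsSymm) (hLyap : Fᵀ * P + P * F = -W) (z e : n → ℝ) :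
    2 * (z ⬝ᵥ (P *ᵥ (F *ᵥ z + (z ⬝ᵥ (Q *ᵥ z) + (fun j => R 0 j) ⬝ᵥ e) • fun i => B i 0))) =
      -(z ⬝ᵥ (W *ᵥ z)) + 2 * (z ⬝ᵥ ((P * B * R) *ᵥ e)) +
        2 * (z ⬝ᵥ (Q *ᵥ z)) * (z ⬝ᵥ (P *ᵥ fun i => B i 0)) := by
  rw [mulVec_add, dotProduct_add, mulVec_smul, dotProduct_smul, smul_eq_mul,
    dotProduct_mul_mul_mulVec]
  linear_combination two_dotProduct_mulVec_of_lyapunov hP hLyap z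

lemma two_dotProduct_error_eq {G P W Q : Matrix n n ℝ} {C : Matrix n (Fin 1) ℝ}
    {R : Matrix (Fin 1) n ℝ} (hP : P.IsSymm) (hLyap : Gᵀ * P + P * G = -W) (z e : n → ℝ) :
    2 * (e ⬝ᵥ (P *ᵥ (G *ᵥ e + ((fun j => R 0 j) ⬝ᵥ z) • (fun i => C i 0) +
        (2 * (z ⬝ᵥ (Q *ᵥ e)) + e ⬝ᵥ (Q *ᵥ e)) • fun i => C i 0))) =
      -(e ⬝ᵥ (W *ᵥ e)) + 2 * (z ⬝ᵥ ((Rᵀ * Cᵀ * P) *ᵥ e)) +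
        4 * (z ⬝ᵥ (Q *ᵥ e)) * (e ⬝ᵥ (P *ᵥ fun i => C i 0)) +
        2 * (e ⬝ᵥ (Q *ᵥ e)) * (e ⬝ᵥ (P *ᵥ fun i => C i 0)) := by
  have hcross : z ⬝ᵥ ((Rᵀ * Cᵀ * P) *ᵥ e) = e ⬝ᵥ ((P * C * R) *ᵥ z) := by
    rw [← hP.eq, ← transpose_mul, ← transpose_mul, dotProduct_mulVec,
      vecMul_transpose, dotProduct_comm, hP.eq, Matrix.mul_assoc]
  rw [hcross, dotProduct_mul_mul_mulVec, mulVec_add, mulVec_add, dotProduct_add,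
    dotProduct_add, mulVec_smul, mulVec_smul, dotProduct_smul, dotProduct_smul,
    smul_eq_mul, smul_eq_mul]
  linear_combination two_dotProduct_mulVec_of_lyapunov hP hLyap e

end Dynamics

lemma rpow_three_halves {x : ℝ} (hx : 0 ≤ x) : x ^ ((3 : ℝ) / 2) = √x ^ 3 := by
  rw [Real.rpow_div_two_eq_sqrt _ hx]
  norm_cast

section Estimates

variable {n : Type*} [Fintype n] [DecidableEq n]

lemma min_iInf_div_max_iSup_mul_le [Nonempty n] {W1 W2 P1 P2 : Matrix n n ℝ}
    (hW1 : W1.PosDef) (hW2 : W2.PosDef) (hP1 : P1.PosDef) (hP2 : P2.PosDef) (z e : n → ℝ) :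
    min (⨅ i, hW1.1.eigenvalues i) (⨅ i, hW2.1.eigenvalues i) /
        max (⨆ i, hP1.1.eigenvalues i) (⨆ i, hP2.1.eigenvalues i) *
        (z ⬝ᵥ (P1 *ᵥ z) + e ⬝ᵥ (P2 *ᵥ e)) ≤
      z ⬝ᵥ (W1 *ᵥ z) + e ⬝ᵥ (W2 *ᵥ e) := by
  set w := min (⨅ i, hW1.1.eigenvalues i) (⨅ i, hW2.1.eigenvalues i)
  set s := max (⨆ i, hP1.1.eigenvalues i) (⨆ i, hP2.1.eigenvalues i)
  have hs : 0 < s := lt_max_of_lt_left hP1.iSup_eigenvalues_pos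
  have hw : 0 ≤ w := le_min hW1.iInf_eigenvalues_pos.le hW2.iInf_eigenvalues_pos.le
  rw [div_mul_eq_mul_div, div_le_iff₀ hs]
  calc w * (z ⬝ᵥ (P1 *ᵥ z) + e ⬝ᵥ (P2 *ᵥ e)) ≤ w * (s * evnorm z ^ 2 + s * evnorm e ^ 2) := by
        gcongr
        · exact (hP1.1.le_iSup_eigenvalues_mul z).trans (by gcongr; exact le_max_left _ _)
        · exact (hP2.1.le_iSup_eigenvalues_mul e).trans (by gcongr; exact le_max_right _ _)
    _ = (w * evnorm z ^ 2 + w * evnorm e ^ 2) * s := by ring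
    _ ≤ (z ⬝ᵥ (W1 *ᵥ z) + e ⬝ᵥ (W2 *ᵥ e)) * s := by
        gcongr
        · exact (mul_le_mul_of_nonneg_right (min_le_left _ _) (sq_nonneg _)).trans
            (hW1.1.iInf_eigenvalues_mul_le z)
        · exact (mul_le_mul_of_nonneg_right (min_le_right _ _) (sq_nonneg _)).trans
            (hW2.1.iInf_eigenvalues_mul_le e)

variable {l1 l2 V : ℝ} {z e : n → ℝ}

lemma two_dotProduct_mulVec_add_le (hl1 : 0 ≤ l1) (hV : 0 ≤ V)
    (hz : evnorm z ≤ √V / √l1) (he : evnorm e ≤ √V / √l2) (M1 M2 : Matrix n n ℝ) :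
    2 * (z ⬝ᵥ (M1 *ᵥ e)) + 2 * (z ⬝ᵥ (M2 *ᵥ e)) ≤
      (2 * opNorm M1 + 2 * opNorm M2) / √(l1 * l2) * V := by
  have h1 := dotProduct_mulVec_le_of_evnorm_le M1 hz he
  have h2 := dotProduct_mulVec_le_of_evnorm_le M2 hz he
  rw [Real.sq_sqrt hV, ← Real.sqrt_mul hl1] at h1 h2
  calc _ ≤ 2 * (opNorm M1 / √(l1 * l2) * V) + 2 * (opNorm M2 / √(l1 * l2) * V) := by linarith
    _ = _ := by ring

lemma cubic_terms_le (hl1 : 0 ≤ l1) (hl2 : 0 ≤ l2) (hV : 0 ≤ V)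
    (hz : evnorm z ≤ √V / √l1) (he : evnorm e ≤ √V / √l2) (Q P1 P2 : Matrix n n ℝ)
    (B C : Matrix n (Fin 1) ℝ) :
    2 * (z ⬝ᵥ (Q *ᵥ z)) * (z ⬝ᵥ (P1 *ᵥ fun i => B i 0)) +
        4 * (z ⬝ᵥ (Q *ᵥ e)) * (e ⬝ᵥ (P2 *ᵥ fun i => C i 0)) +
        2 * (e ⬝ᵥ (Q *ᵥ e)) * (e ⬝ᵥ (P2 *ᵥ fun i => C i 0)) ≤
      (2 * opNorm (P1 * B) * opNorm Q / l1 ^ ((3 : ℝ) / 2) +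
        4 * opNorm (P2 * C) * opNorm Q / (√l1 * l2) +
        2 * opNorm (P2 * C) * opNorm Q / l2 ^ ((3 : ℝ) / 2)) * V ^ ((3 : ℝ) / 2) := by
  have h1 := dotProduct_mulVec_mul_le_of_evnorm_le Q P1 B hz hz hz
  have h2 := dotProduct_mulVec_mul_le_of_evnorm_le Q P2 C hz he he
  have h3 := dotProduct_mulVec_mul_le_of_evnorm_le Q P2 C he he he
  rw [mul_assoc (√l1), Real.mul_self_sqrt hl2] at h2
  rw [rpow_three_halves hl1, rpow_three_halves hl2, rpow_three_halves hV]
  calc _ ≤ 2 * (opNorm Q * opNorm (P1 * B) / (√l1 * √l1 * √l1) * √V ^ 3) +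
        4 * (opNorm Q * opNorm (P2 * C) / (√l1 * l2) * √V ^ 3) +
        2 * (opNorm Q * opNorm (P2 * C) / (√l2 * √l2 * √l2) * √V ^ 3) := by linarith
    _ = _ := by ring

end Estimates

lemma zdot_eq {np nc : ℕ} (Ap : Matrix (Fin np) (Fin np) ℝ) (Ac : Matrix (Fin nc) (Fin nc) ℝ)
    (Bp : Matrix (Fin np) (Fin 1) ℝ) (Bc : Matrix (Fin nc) (Fin 1) ℝ)
    (Cc : Matrix (Fin 1) (Fin nc) ℝ) (Dc : ℝ) (Qp : Matrix (Fin np) (Fin np) ℝ)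
    (π : Fin np → ℝ) (z e : Fin np ⊕ Fin nc → ℝ) :
    zdot Ap Ac Bp Bc Cc Dc Qp π z e =
      Fbar Ap Ac Bp Bc Cc Dc Qp π *ᵥ z +
        (z ⬝ᵥ (Qmat Qp *ᵥ z) + (fun j => Hbar Qp π 0 j) ⬝ᵥ e) • fun i => Bmat Bp Bc Dc i 0 := by
  rw [zdot, Fbar, add_mulVec, mul_mulVec_eq_smul, dotProduct_add, add_smul, add_smul,
    add_smul]
  abel

lemma edot_eq {np nc : ℕ} (Ap : Matrix (Fin np) (Fin np) ℝ) (Ac : Matrix (Fin nc) (Fin nc) ℝ)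
    (Bp : Matrix (Fin np) (Fin 1) ℝ) (Bc : Matrix (Fin nc) (Fin 1) ℝ)
    (Cc : Matrix (Fin 1) (Fin nc) ℝ) (Dc : ℝ) (Qp : Matrix (Fin np) (Fin np) ℝ)
    (π : Fin np → ℝ) (L : Matrix (Fin np ⊕ Fin nc) (Fin 1) ℝ) (z e : Fin np ⊕ Fin nc → ℝ) :
    edot Ap Ac Bp Bc Cc Dc Qp π L z e =
      (Fbar Ap Ac Bp Bc Cc Dc Qp π + L * Hbar Qp π) *ᵥ e +
        ((fun j => Hbar Qp π 0 j) ⬝ᵥ z) • (fun i => (Bmat Bp Bc Dc + L) i 0) +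
        (2 * (z ⬝ᵥ (Qmat Qp *ᵥ e)) + e ⬝ᵥ (Qmat Qp *ᵥ e)) • fun i => (Bmat Bp Bc Dc + L) i 0 := by
  rw [edot, mul_mulVec_eq_smul]

theorem lyapunov_derivative_bound_general
    (Ap : Matrix (Fin np) (Fin np) ℝ) (Ac : Matrix (Fin nc) (Fin nc) ℝ)
    (Bp : Matrix (Fin np) (Fin 1) ℝ) (Bc : Matrix (Fin nc) (Fin 1) ℝ)
    (Cc : Matrix (Fin 1) (Fin nc) ℝ) (Dc : ℝ)
    (Qp : Matrix (Fin np) (Fin np) ℝ)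
    (π : Fin np → ℝ) (L : Matrix (Fin np ⊕ Fin nc) (Fin 1) ℝ)
    (W1 W2 P1 P2 : Matrix (Fin np ⊕ Fin nc) (Fin np ⊕ Fin nc) ℝ)
    (hW1 : W1.PosDef) (hW2 : W2.PosDef) (hP1 : P1.PosDef) (hP2 : P2.PosDef)
    (hLyap1 : (Fbar Ap Ac Bp Bc Cc Dc Qp π)ᵀ * P1 + P1 * Fbar Ap Ac Bp Bc Cc Dc Qp π = -W1)
    (hLyap2 : (Fbar Ap Ac Bp Bc Cc Dc Qp π + L * Hbar Qp π)ᵀ * P2 +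
      P2 * (Fbar Ap Ac Bp Bc Cc Dc Qp π + L * Hbar Qp π) = -W2)
    (c1 c3 c4 c2 : ℝ)
    (hc1 : c1 = min (⨅ i, hW1.1.eigenvalues i) (⨅ i, hW2.1.eigenvalues i) /
      max (⨆ i, hP1.1.eigenvalues i) (⨆ i, hP2.1.eigenvalues i))
    (hc3 : c3 = (2 * opNorm (P1 * Bmat Bp Bc Dc * Hbar Qp π (nc := nc)) +
        2 * opNorm ((Hbar Qp π (nc := nc))ᵀ * (Bmat Bp Bc Dc + L)ᵀ * P2)) /
      Real.sqrt ((⨅ i, hP1.1.eigenvalues i) * (⨅ i, hP2.1.eigenvalues i)))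
    (hc4 : c4 =
      2 * opNorm (P1 * Bmat Bp Bc Dc) * opNorm (Qmat Qp (nc := nc)) /
        (⨅ i, hP1.1.eigenvalues i) ^ ((3 : ℝ) / 2) +
      4 * opNorm (P2 * (Bmat Bp Bc Dc + L)) * opNorm (Qmat Qp (nc := nc)) /
        (Real.sqrt (⨅ i, hP1.1.eigenvalues i) * (⨅ i, hP2.1.eigenvalues i)) +
      2 * opNorm (P2 * (Bmat Bp Bc Dc + L)) * opNorm (Qmat Qp (nc := nc)) /
        (⨅ i, hP2.1.eigenvalues i) ^ ((3 : ℝ) / 2))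
    (hc2 : c2 = c1 - c3) :
    ∀ z e : Fin np ⊕ Fin nc → ℝ,
      2 * (z ⬝ᵥ (P1 *ᵥ zdot Ap Ac Bp Bc Cc Dc Qp π z e)) +
          2 * (e ⬝ᵥ (P2 *ᵥ edot Ap Ac Bp Bc Cc Dc Qp π L z e)) ≤
        -c2 * (z ⬝ᵥ (P1 *ᵥ z) + e ⬝ᵥ (P2 *ᵥ e)) +
          c4 * (z ⬝ᵥ (P1 *ᵥ z) + e ⬝ᵥ (P2 *ᵥ e)) ^ ((3 : ℝ) / 2) := by
  intro z e
  rcases isEmpty_or_nonempty (Fin np ⊕ Fin nc) with hempty | hne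
  -- over an empty index type the eigenvalue infima are the junk value `0`
  · simp [dotProduct, Finset.univ_eq_empty, Real.zero_rpow]
  set l1 := ⨅ i, hP1.1.eigenvalues i
  set l2 := ⨅ i, hP2.1.eigenvalues i
  set V := z ⬝ᵥ (P1 *ᵥ z) + e ⬝ᵥ (P2 *ᵥ e)
  have hV1 : 0 ≤ z ⬝ᵥ (P1 *ᵥ z) := by simpa using hP1.posSemidef.dotProduct_mulVec_nonneg z
  have hV2 : 0 ≤ e ⬝ᵥ (P2 *ᵥ e) := by simpa using hP2.posSemidef.dotProduct_mulVec_nonneg e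
  have hz : evnorm z ≤ √V / √l1 := hP1.evnorm_le (le_add_of_nonneg_right hV2)
  have he : evnorm e ≤ √V / √l2 := hP2.evnorm_le (le_add_of_nonneg_left hV1)
  have hl1 := hP1.iInf_eigenvalues_pos.le
  have hl2 := hP2.iInf_eigenvalues_pos.le
  have hdissipation := hc1 ▸ min_iInf_div_max_iSup_mul_le hW1 hW2 hP1 hP2 z e
  have hcross := hc3 ▸ two_dotProduct_mulVec_add_le hl1 (add_nonneg hV1 hV2) hz he
    (P1 * Bmat Bp Bc Dc * Hbar Qp π) ((Hbar Qp π)ᵀ * (Bmat Bp Bc Dc + L)ᵀ * P2)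
  have hcubic := hc4 ▸ cubic_terms_le hl1 hl2 (add_nonneg hV1 hV2) hz he (Qmat Qp) P1 P2
    (Bmat Bp Bc Dc) (Bmat Bp Bc Dc + L)
  rw [zdot_eq, edot_eq, two_dotProduct_state_eq (isHermitian_iff_isSymm.mp hP1.1) hLyap1,
    two_dotProduct_error_eq (isHermitian_iff_isSymm.mp hP2.1) hLyap2, hc2]
  linarith

/-- the Lyapunov derivative bound
`2z^⊤P_1ż + 2e^⊤P_2ė ≤ −c_2 V + c_4 V^{3/2}`. -/
theorem lyapunov_derivative_bound
    (Ap : Matrix (Fin np) (Fin np) ℝ) (Ac : Matrix (Fin nc) (Fin nc) ℝ)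
    (Bp : Matrix (Fin np) (Fin 1) ℝ) (Bc : Matrix (Fin nc) (Fin 1) ℝ)
    (Cc : Matrix (Fin 1) (Fin nc) ℝ) (Dc : ℝ)
    (Qp : Matrix (Fin np) (Fin np) ℝ) (hQp : Qp.IsSymm)
    (π : Fin np → ℝ) (L : Matrix (Fin np ⊕ Fin nc) (Fin 1) ℝ)
    (W1 W2 P1 P2 : Matrix (Fin np ⊕ Fin nc) (Fin np ⊕ Fin nc) ℝ)
    (hW1 : W1.PosDef) (hW2 : W2.PosDef) (hP1 : P1.PosDef) (hP2 : P2.PosDef)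
    (hLyap1 : (Fbar Ap Ac Bp Bc Cc Dc Qp π)ᵀ * P1 + P1 * Fbar Ap Ac Bp Bc Cc Dc Qp π = -W1)
    (hLyap2 : (Fbar Ap Ac Bp Bc Cc Dc Qp π + L * Hbar Qp π)ᵀ * P2 +
      P2 * (Fbar Ap Ac Bp Bc Cc Dc Qp π + L * Hbar Qp π) = -W2)
    (c1 c3 c4 c2 : ℝ)
    (hc1 : c1 = min (⨅ i, hW1.1.eigenvalues i) (⨅ i, hW2.1.eigenvalues i) /
      max (⨆ i, hP1.1.eigenvalues i) (⨆ i, hP2.1.eigenvalues i))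
    (hc3 : c3 = (2 * opNorm (P1 * Bmat Bp Bc Dc * Hbar Qp π (nc := nc)) +
        2 * opNorm ((Hbar Qp π (nc := nc))ᵀ * (Bmat Bp Bc Dc + L)ᵀ * P2)) /
      Real.sqrt ((⨅ i, hP1.1.eigenvalues i) * (⨅ i, hP2.1.eigenvalues i)))
    (hc4 : c4 =
      2 * opNorm (P1 * Bmat Bp Bc Dc) * opNorm (Qmat Qp (nc := nc)) /
        (⨅ i, hP1.1.eigenvalues i) ^ ((3 : ℝ) / 2) +
      4 * opNorm (P2 * (Bmat Bp Bc Dc + L)) * opNorm (Qmat Qp (nc := nc)) /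
        (Real.sqrt (⨅ i, hP1.1.eigenvalues i) * (⨅ i, hP2.1.eigenvalues i)) +
      2 * opNorm (P2 * (Bmat Bp Bc Dc + L)) * opNorm (Qmat Qp (nc := nc)) /
        (⨅ i, hP2.1.eigenvalues i) ^ ((3 : ℝ) / 2))
    (hc2 : c2 = c1 - c3) :
    ∀ z e : Fin np ⊕ Fin nc → ℝ,
      2 * (z ⬝ᵥ (P1 *ᵥ zdot Ap Ac Bp Bc Cc Dc Qp π z e)) +
          2 * (e ⬝ᵥ (P2 *ᵥ edot Ap Ac Bp Bc Cc Dc Qp π L z e)) ≤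
        -c2 * (z ⬝ᵥ (P1 *ᵥ z) + e ⬝ᵥ (P2 *ᵥ e)) +
          c4 * (z ⬝ᵥ (P1 *ᵥ z) + e ⬝ᵥ (P2 *ᵥ e)) ^ ((3 : ℝ) / 2) :=
  lyapunov_derivative_bound_general Ap Ac Bp Bc Cc Dc Qp π L W1 W2 P1 P2 hW1 hW2 hP1 hP2 hLyap1
    hLyap2 c1 c3 c4 c2 hc1 hc3 hc4 hc2
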